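/- arXiv:1106.1337 — 3 statements merged into one kernel-verified Lean document; each statement's English description precedes it below -/
import Mathlib

section
/- Let F be a field, let n ≥ 1 and 0 ≤ k ≤ n, and fix a, b ∈ F. Let h be a polynomial in n variables t_1, …, t_n over F that is symmetric in the first k variables and symmetric in the last n − k variables, and whose total degree is strictly less than n. Suppose that (whenever k ≥ 1) substituting t_1 := a into h yields the zero polynomial, and that (whenever k ≤ n − 1) substituting t_n := b into h yields the zero polynomial. Then h is the zero polynomial. (Equivalently: a polynomial f of total degree < n with these symmetries is uniquely determined by its two evaluations f(a, t_2, …, t_n) and f(t_1, …, t_{n−1}, b).) -/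
/-!
By the two partial symmetries, swapping `t₁` (resp. `tₙ`) with any other variable of the same
block shows that `h` vanishes under `tᵢ := a` for every `i ≤ k` and under `tᵢ := b` for every
`i > k`. Each such vanishing makes `tᵢ - cᵢ` a factor of `h`; these `n` linear factors involve
distinct variables, so a nonzero `h` would have total degree at least `n`.
-/

open MvPolynomial

namespace MvPolynomial

variable {R σ : Type*} [CommRing R] [DecidableEq σ]

noncomputable def substVar (i : σ) (c : R) : MvPolynomial σ R →ₐ[R] MvPolynomial σ R :=
  aeval fun j => if j = i then C c else X j

omit [DecidableEq σ] in
theorem totalDegree_X_sub_C [Nontrivial R] (i : σ) (c : R) :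
    (X i - C c : MvPolynomial σ R).totalDegree = 1 := by
  refine le_antisymm ((totalDegree_sub_C_le _ _).trans (totalDegree_X i).le) ?_
  have hmem : Finsupp.single i 1 ∈ (X i - C c : MvPolynomial σ R).support := by
    classical
    simp [coeff_C, eq_comm]
  simpa using le_totalDegree hmem

omit [DecidableEq σ] in
theorem X_sub_C_ne_zero [Nontrivial R] (i : σ) (c : R) : (X i - C c : MvPolynomial σ R) ≠ 0 :=
  fun h0 => by simpa [h0] using totalDegree_X_sub_C i c

theorem substVar_X_sub_C_of_ne {i j : σ} (hij : j ≠ i) (c d : R) :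
    substVar i c (X j - C d) = X j - C d := by
  simp [substVar, hij]

/-- Modulo `tᵢ - c`, the substitution `tᵢ := c` is the identity. -/
theorem X_sub_C_dvd_of_substVar_eq_zero {i : σ} {c : R} {p : MvPolynomial σ R}
    (hp : substVar i c p = 0) : X i - C c ∣ p := by
  set I := Ideal.span {(X i - C c : MvPolynomial σ R)}
  have hmod : (Ideal.Quotient.mkₐ R I).comp (substVar i c) = Ideal.Quotient.mkₐ R I := by
    refine algHom_ext fun j => ?_
    by_cases hji : j = i
    · subst hji
      simpa [substVar, Ideal.Quotient.mk_eq_mk_iff_sub_mem] using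
        I.neg_mem (Ideal.subset_span rfl)
    · simp [substVar, hji]
  have hp' : Ideal.Quotient.mk I p = 0 := by
    simpa [hp] using (congrArg (· p) hmod).symm
  exact Ideal.mem_span_singleton.mp (Ideal.Quotient.eq_zero_iff_mem.mp hp')

theorem substVar_comp_rename_swap (p i : σ) (c : R) :
    (substVar i c).comp (rename (Equiv.swap p i)) =
      (rename (Equiv.swap p i)).comp (substVar p c) := by
  refine algHom_ext fun j => ?_
  by_cases hjp : j = p
  · subst hjp
    simp [substVar]
  · simp [substVar, hjp, Equiv.swap_apply_eq_iff]

theorem substVar_eq_zero_of_rename_swap_eq {p i : σ} {c : R} {h : MvPolynomial σ R}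
    (hsym : rename (Equiv.swap p i) h = h) (hp : substVar p c h = 0) : substVar i c h = 0 := by
  rw [← hsym, ← AlgHom.comp_apply, substVar_comp_rename_swap, AlgHom.comp_apply, hp, map_zero]

theorem card_le_totalDegree_of_substVar_eq_zero [IsDomain R] {h : MvPolynomial σ R} (hh : h ≠ 0)
    (s : Finset σ) (c : σ → R) (hv : ∀ i ∈ s, substVar i (c i) h = 0) :
    s.card ≤ h.totalDegree := by
  induction s using Finset.induction generalizing h with
  | empty => simp
  | @insert j s hj ih =>
    obtain ⟨g, rfl⟩ := X_sub_C_dvd_of_substVar_eq_zero (hv j (Finset.mem_insert_self j s))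
    have hg : g ≠ 0 := right_ne_zero_of_mul hh
    have hvg : ∀ i ∈ s, substVar i (c i) g = 0 := fun i hi => by
      have hv' := hv i (Finset.mem_insert_of_mem hi)
      rw [map_mul, substVar_X_sub_C_of_ne (ne_of_mem_of_not_mem hi hj).symm] at hv'
      exact (mul_eq_zero.mp hv').resolve_left (X_sub_C_ne_zero j (c j))
    rw [totalDegree_mul_of_isDomain (X_sub_C_ne_zero j (c j)) hg, totalDegree_X_sub_C,
      Finset.card_insert_of_notMem hj]
    have := ih hg hvg
    omega

end MvPolynomial

theorem stmt_0_general (F : Type*) [Field F] (n k : ℕ) (hn : 1 ≤ n) (a b : F)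
    (h : MvPolynomial (Fin n) F)
    (hsym₁ : ∀ σ : Equiv.Perm (Fin n), (∀ i : Fin n, k ≤ (i : ℕ) → σ i = i) →
      MvPolynomial.rename σ h = h)
    (hsym₂ : ∀ σ : Equiv.Perm (Fin n), (∀ i : Fin n, (i : ℕ) < k → σ i = i) →
      MvPolynomial.rename σ h = h)
    (hdeg : h.totalDegree < n)
    (ha : 1 ≤ k → MvPolynomial.aeval
      (fun i : Fin n => if i = (⟨0, hn⟩ : Fin n) then MvPolynomial.C a else MvPolynomial.X i)
      h = 0)
    (hb : k ≤ n - 1 → MvPolynomial.aeval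
      (fun i : Fin n => if i = (⟨n - 1, Nat.sub_lt hn Nat.one_pos⟩ : Fin n)
        then MvPolynomial.C b else MvPolynomial.X i) h = 0) :
    h = 0 := by
  by_contra hh
  have hvanish : ∀ i : Fin n, substVar i (if (i : ℕ) < k then a else b) h = 0 := by
    intro i
    split_ifs with hik
    · refine substVar_eq_zero_of_rename_swap_eq (hsym₁ _ fun l hl => ?_) (ha (by omega))
      exact Equiv.swap_apply_of_ne_of_ne (Fin.ne_of_val_ne (by dsimp only; omega))
        (Fin.ne_of_val_ne (by omega))
    · refine substVar_eq_zero_of_rename_swap_eq (hsym₂ _ fun l hl => ?_) (hb (by omega))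
      exact Equiv.swap_apply_of_ne_of_ne (Fin.ne_of_val_ne (by dsimp only; omega))
        (Fin.ne_of_val_ne (by omega))
  have hcard := card_le_totalDegree_of_substVar_eq_zero hh Finset.univ _ fun i _ => hvanish i
  rw [Finset.card_univ, Fintype.card_fin] at hcard
  omega

/-- A polynomial in `n` variables over a field `F`, symmetric in the first `k` variables
and in the last `n - k` variables, of total degree `< n`, which vanishes upon the
substitution `t₁ := a` (when `k ≥ 1`) and upon the substitution `tₙ := b`
(when `k ≤ n - 1`), must be the zero polynomial. -/
theorem stmt_0 (F : Type*) [Field F] (n k : ℕ) (hn : 1 ≤ n) (hk : k ≤ n) (a b : F)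
    (h : MvPolynomial (Fin n) F)
    (hsym₁ : ∀ σ : Equiv.Perm (Fin n), (∀ i : Fin n, k ≤ (i : ℕ) → σ i = i) →
      MvPolynomial.rename σ h = h)
    (hsym₂ : ∀ σ : Equiv.Perm (Fin n), (∀ i : Fin n, (i : ℕ) < k → σ i = i) →
      MvPolynomial.rename σ h = h)
    (hdeg : h.totalDegree < n)
    (ha : 1 ≤ k → MvPolynomial.aeval
      (fun i : Fin n => if i = (⟨0, hn⟩ : Fin n) then MvPolynomial.C a else MvPolynomial.X i)
      h = 0)
    (hb : k ≤ n - 1 → MvPolynomial.aeval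
      (fun i : Fin n => if i = (⟨n - 1, Nat.sub_lt hn Nat.one_pos⟩ : Fin n)
        then MvPolynomial.C b else MvPolynomial.X i) h = 0) :
    h = 0 :=
  stmt_0_general F n k hn a b h hsym₁ hsym₂ hdeg ha hb
end

section
/- Define polynomials p_α ∈ ℚ[X] recursively by p_0(X) = 1 and p_{α+1}(X) = 4X²·(p_α(X) − p_α(X−1)) + 4X·p_α(X−1). Then for all integers n ≥ 0 and α ≥ 0, the following binomial-sum identity holds: Σ_{l=0}^{n} C(2n, n−l)·(2l)^{2α+1} = p_α(n) · n · C(2n, n), where C(m, j) denotes the binomial coefficient. -/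
open Polynomial

/-- The polynomials `p_α` defined by `p_0(X) = 1` and
`p_{α+1}(X) = 4X²·(p_α(X) − p_α(X−1)) + 4X·p_α(X−1)`. -/
noncomputable def pPoly : ℕ → Polynomial ℚ
  | 0 => 1
  | α + 1 => 4 * X ^ 2 * (pPoly α - (pPoly α).comp (X - 1)) + 4 * X * (pPoly α).comp (X - 1)

/-!
Write `S_α(n)` for the left-hand side. Since `C(2n, n−l)·(n² − l²) = 2n(2n−1)·C(2n−2, n−1−l)`,
multiplying the summand by `(2l)² = 4n² − 4(n² − l²)` gives the recursion
`S_{α+1}(n) = 4n²·S_α(n) − 8n(2n−1)·S_α(n−1)`. The right-hand side `p_α(n)·n·C(2n, n)` obeys the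
same recursion, by the defining recursion of `p_α` and `n·C(2n, n) = 2(2n−1)·C(2n−2, n−1)`.
Both sides vanish at `n = 0`, and for `α = 0` the sum telescopes to `n·C(2n, n)`.
-/

theorem Nat.choose_mul_mul_sub_eq (N k : ℕ) :
    (N + 2).choose (k + 1) * ((k + 1) * (N + 1 - k)) = (N + 2) * (N + 1) * N.choose k := by
  rw [← Nat.mul_assoc, ← Nat.add_one_mul_choose_eq, Nat.mul_assoc, ← Nat.choose_mul_succ_eq]
  ring

def oddMomentSum (α n : ℕ) : ℚ :=
  ∑ l ∈ Finset.range (n + 1), ((2 * n).choose (n - l) : ℚ) * (2 * l : ℚ) ^ (2 * α + 1)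

theorem choose_mul_two_mul_eq_sub {n l : ℕ} (h : l < n) :
    ((2 * n).choose (n - l) : ℚ) * (2 * l)
      = (n + l) * (2 * n).choose (n - l) - (n + (l + 1) : ℚ) * (2 * n).choose (n - (l + 1)) := by
  obtain ⟨d, rfl⟩ : ∃ d, n = l + d + 1 := ⟨n - l - 1, by omega⟩
  have key := Nat.choose_succ_right_eq (2 * (l + d + 1)) d
  rw [show 2 * (l + d + 1) - d = 2 * l + d + 2 by omega] at key
  rw [show l + d + 1 - l = d + 1 by omega, show l + d + 1 - (l + 1) = d by omega]
  have keyQ : ((2 * (l + d + 1)).choose (d + 1) : ℚ) * (d + 1)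
      = (2 * (l + d + 1)).choose d * (2 * l + d + 2) := by exact_mod_cast key
  push_cast
  linear_combination -keyQ

theorem oddMomentSum_zero_left (n : ℕ) : oddMomentSum 0 n = n * (2 * n).choose n := by
  have telescope : ∀ l ∈ Finset.range n,
      ((2 * n).choose (n - l) : ℚ) * (2 * l : ℚ) ^ (2 * 0 + 1)
        = (n + l) * (2 * n).choose (n - l)
          - (n + (l + 1 : ℕ) : ℚ) * (2 * n).choose (n - (l + 1)) := by
    intro l hl
    rw [pow_one, choose_mul_two_mul_eq_sub (Finset.mem_range.mp hl)]
    push_cast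
    ring
  rw [oddMomentSum, Finset.sum_range_succ, Finset.sum_congr rfl telescope,
    Finset.sum_range_sub' (fun k : ℕ => (n + k : ℚ) * (2 * n).choose (n - k))]
  simp only [Nat.sub_self, Nat.sub_zero, Nat.choose_zero_right]
  push_cast
  ring

theorem two_mul_sq_mul_choose_eq {m l : ℕ} (h : l ≤ m) :
    (2 * l : ℚ) ^ 2 * (2 * (m + 1)).choose (m + 1 - l)
      = 4 * (m + 1 : ℚ) ^ 2 * (2 * (m + 1)).choose (m + 1 - l)
        - 8 * (m + 1 : ℚ) * (2 * m + 1) * (2 * m).choose (m - l) := by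
  obtain ⟨d, rfl⟩ : ∃ d, m = l + d := ⟨m - l, by omega⟩
  have key := Nat.choose_mul_mul_sub_eq (2 * (l + d)) d
  rw [show 2 * (l + d) + 2 = 2 * (l + d + 1) by omega,
    show 2 * (l + d) + 1 - d = 2 * l + d + 1 by omega] at key
  rw [show l + d + 1 - l = d + 1 by omega, show l + d - l = d by omega]
  have keyQ : ((2 * (l + d + 1)).choose (d + 1) : ℚ) * ((d + 1) * (2 * l + d + 1))
      = (2 * (l + d) + 2) * (2 * (l + d) + 1) * (2 * (l + d)).choose d := by exact_mod_cast key
  push_cast at keyQ ⊢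
  linear_combination (-4) * keyQ

theorem oddMomentSum_succ_succ (α m : ℕ) :
    oddMomentSum (α + 1) (m + 1)
      = 4 * (m + 1 : ℚ) ^ 2 * oddMomentSum α (m + 1)
        - 8 * (m + 1 : ℚ) * (2 * m + 1) * oddMomentSum α m := by
  have term : ∀ l ∈ Finset.range (m + 1),
      ((2 * (m + 1)).choose (m + 1 - l) : ℚ) * (2 * l : ℚ) ^ (2 * (α + 1) + 1)
        = 4 * (m + 1 : ℚ) ^ 2
            * (((2 * (m + 1)).choose (m + 1 - l) : ℚ) * (2 * l) ^ (2 * α + 1))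
          - 8 * (m + 1 : ℚ) * (2 * m + 1)
            * (((2 * m).choose (m - l) : ℚ) * (2 * l) ^ (2 * α + 1)) := by
    intro l hl
    have h := two_mul_sq_mul_choose_eq (Nat.lt_succ_iff.mp (Finset.mem_range.mp hl))
    rw [show 2 * (α + 1) + 1 = 2 * α + 1 + 2 by ring, pow_add]
    linear_combination (2 * l : ℚ) ^ (2 * α + 1) * h
  simp only [oddMomentSum]
  rw [Finset.sum_range_succ, Finset.sum_congr rfl term, Finset.sum_range_succ _ (m + 1),
    Finset.sum_sub_distrib, ← Finset.mul_sum, ← Finset.mul_sum]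
  simp only [Nat.sub_self, Nat.choose_zero_right]
  push_cast
  ring

theorem pPoly_eval_mul_choose_succ_succ (α m : ℕ) :
    (pPoly (α + 1)).eval (m + 1 : ℚ) * (m + 1 : ℚ) * (2 * (m + 1)).choose (m + 1)
      = 4 * (m + 1 : ℚ) ^ 2
          * ((pPoly α).eval (m + 1 : ℚ) * (m + 1 : ℚ) * (2 * (m + 1)).choose (m + 1))
        - 8 * (m + 1 : ℚ) * (2 * m + 1) * ((pPoly α).eval (m : ℚ) * m * (2 * m).choose m) := by
  have key := Nat.choose_mul_mul_sub_eq (2 * m) m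
  rw [show 2 * m + 2 = 2 * (m + 1) by ring, show 2 * m + 1 - m = m + 1 by omega] at key
  have keyQ : ((2 * (m + 1)).choose (m + 1) : ℚ) * ((m + 1) * (m + 1))
      = (2 * m + 2) * (2 * m + 1) * (2 * m).choose m := by exact_mod_cast key
  simp only [pPoly, eval_add, eval_mul, eval_sub, eval_pow, eval_X, eval_comp, eval_one,
    eval_ofNat, add_sub_cancel_right]
  linear_combination (-4 * m * (pPoly α).eval (m : ℚ)) * keyQ

/-- The binomial-sum identity
`Σ_{l=0}^{n} C(2n, n−l)·(2l)^{2α+1} = p_α(n) · n · C(2n, n)`. -/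
theorem stmt_3 (n α : ℕ) :
    ∑ l ∈ Finset.range (n + 1), ((2 * n).choose (n - l) : ℚ) * (2 * l : ℚ) ^ (2 * α + 1)
      = (pPoly α).eval (n : ℚ) * (n : ℚ) * ((2 * n).choose n : ℚ) := by
  change oddMomentSum α n = _
  induction α generalizing n with
  | zero => simp [oddMomentSum_zero_left, pPoly]
  | succ α ih =>
    rcases n with _ | m
    · simp [oddMomentSum]
    · push_cast
      rw [oddMomentSum_succ_succ, ih, ih, pPoly_eval_mul_choose_succ_succ]
      push_cast
      ring
end

section
/- For every real number z > 1, setting x = z + 1/z, the following identity holds: ln(1 + z^{−2}) = Σ_{u=0}^∞ ((2u+1)! / ((u+1)!)²) · x^{−2u−2}, and the series on the right converges absolutely. -/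
/-!
With `t = x⁻²` the series is `∑_{n ≥ 1} C(2n, n) tⁿ / (2n)`, the termwise antiderivative of
`(∑ C(2n, n) tⁿ - 1) / (2t) = ((1 - 4t)^(-1/2) - 1) / (2t)`, where the central binomial
generating function is the binomial series of `(1 - 4t)^(-1/2)`. Integrating from `0` gives
`log (2 / (1 + √(1 - 4t)))`, and since `√(1 - 4t) = (z - 1/z) / x` this is
`log (x / z) = log (1 + z⁻²)`.
-/

open Polynomial Real Set

lemma ascPochhammer_eval_half_mul_four_pow (n : ℕ) :
    (ascPochhammer ℝ n).eval (1 / 2) * 4 ^ n = n.centralBinom * n.factorial := by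
  induction n with
  | zero => simp
  | succ n ih =>
    have h : ((n + 1 : ℕ) : ℝ) * (n + 1).centralBinom = 2 * (2 * n + 1) * n.centralBinom := by
      exact_mod_cast Nat.succ_mul_centralBinom_succ n
    rw [ascPochhammer_succ_eval, Nat.factorial_succ, Nat.cast_mul, pow_succ]
    linear_combination 2 * (2 * (n : ℝ) + 1) * ih - n.factorial * h

lemma multichoose_half_mul_four_pow (n : ℕ) :
    Ring.multichoose (1 / 2 : ℝ) n * 4 ^ n = n.centralBinom := by
  have h := Ring.factorial_nsmul_multichoose_eq_ascPochhammer (1 / 2 : ℝ) n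
  rw [ascPochhammer_smeval_eq_eval, nsmul_eq_mul] at h
  have hf : (n.factorial : ℝ) ≠ 0 := by positivity
  apply mul_left_cancel₀ hf
  rw [← mul_assoc, h, ascPochhammer_eval_half_mul_four_pow]
  ring

theorem hasSum_centralBinom_mul_pow {w : ℝ} (hw : |4 * w| < 1) :
    HasSum (fun n ↦ n.centralBinom * w ^ n) (√(1 - 4 * w))⁻¹ := by
  have h := (Real.one_div_one_sub_rpow_hasFPowerSeriesOnBall_zero (1 / 2)).hasSum
    (y := 4 * w) (by rwa [Metric.mem_eball, edist_zero_right, Real.enorm_eq_ofReal_abs,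
      ENNReal.ofReal_lt_one])
  simp only [FormalMultilinearSeries.ofScalars_apply_eq, ← Ring.multichoose_eq, smul_eq_mul,
    zero_add, mul_pow, ← mul_assoc, multichoose_half_mul_four_pow] at h
  rwa [Real.sqrt_eq_rpow, ← one_div]

lemma factorial_div_factorial_sq_mul_eq_centralBinom (u : ℕ) :
    ((2 * u + 1).factorial : ℝ) / ((u + 1).factorial : ℝ) ^ 2 * (2 * (u + 1)) =
      (u + 1).centralBinom := by
  rw [Nat.centralBinom_eq_two_mul_choose, Nat.cast_choose ℝ (by omega),
    show 2 * (u + 1) - (u + 1) = u + 1 by omega, show 2 * (u + 1) = 2 * u + 1 + 1 by ring,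
    Nat.factorial_succ (2 * u + 1)]
  push_cast
  field_simp
  ring

lemma hasSum_mul_pow_succ_intervalIntegral {b : ℕ → ℝ} {f : ℝ → ℝ} {t : ℝ}
    (hb : Summable fun n ↦ |b n| * ((n + 1) * |t| ^ n))
    (hf : ∀ s ∈ uIoc 0 t, HasSum (fun n ↦ b n * ((n + 1) * s ^ n)) (f s)) :
    HasSum (fun n ↦ b n * t ^ (n + 1)) (∫ s in (0)..t, f s) := by
  have hint : ∀ n : ℕ, ∫ s in (0)..t, b n * ((n + 1) * s ^ n) = b n * t ^ (n + 1) := by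
    intro n
    rw [intervalIntegral.integral_const_mul, intervalIntegral.integral_const_mul, integral_pow]
    field_simp
    simp
  simp only [← hint]
  refine intervalIntegral.hasSum_integral_of_dominated_convergence
    (fun n _ ↦ |b n| * ((n + 1) * |t| ^ n)) (fun n ↦ by fun_prop) (fun n ↦ ?_)
    (.of_forall fun _ _ ↦ hb) intervalIntegrable_const (.of_forall hf)
  refine Filter.Eventually.of_forall fun s hs ↦ ?_
  have hst : |s| ≤ |t| := by
    simpa using abs_sub_left_of_mem_uIcc (uIoc_subset_uIcc hs)
  rw [norm_mul, norm_mul, norm_pow, Real.norm_eq_abs, Real.norm_eq_abs, Real.norm_eq_abs,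
    abs_of_nonneg (by positivity : (0 : ℝ) ≤ n + 1)]
  gcongr

lemma hasSum_factorial_div_factorial_sq_mul_pow {s : ℝ} (hs₀ : s ≠ 0) (hs : |4 * s| < 1) :
    HasSum (fun u : ℕ ↦ ((2 * u + 1).factorial : ℝ) / ((u + 1).factorial : ℝ) ^ 2 *
      ((u + 1) * s ^ u)) (2 / (√(1 - 4 * s) * (1 + √(1 - 4 * s)))) := by
  have h := ((hasSum_nat_add_iff' 1).mpr (hasSum_centralBinom_mul_pow hs)).mul_right (2 * s)⁻¹
  have hpos : 0 < √(1 - 4 * s) := sqrt_pos.mpr (by linarith [le_abs_self (4 * s)])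
  have hsq : √(1 - 4 * s) ^ 2 = 1 - 4 * s := sq_sqrt (by linarith [le_abs_self (4 * s)])
  have hval : ((√(1 - 4 * s))⁻¹ - ∑ i ∈ Finset.range 1, (i.centralBinom : ℝ) * s ^ i) *
      (2 * s)⁻¹ = 2 / (√(1 - 4 * s) * (1 + √(1 - 4 * s))) := by
    simp only [Finset.range_one, Finset.sum_singleton, Nat.centralBinom_zero, pow_zero]
    field_simp
    linear_combination -hsq
  refine hval ▸ h.congr_fun fun u ↦ ?_
  rw [← factorial_div_factorial_sq_mul_eq_centralBinom, pow_succ]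
  field_simp
  ring

lemma hasDerivAt_neg_log_one_add_sqrt {s : ℝ} (hs : 4 * s < 1) :
    HasDerivAt (fun s ↦ -log (1 + √(1 - 4 * s)))
      (2 / (√(1 - 4 * s) * (1 + √(1 - 4 * s)))) s := by
  have hpos : 0 < √(1 - 4 * s) := sqrt_pos.mpr (by linarith)
  have hlin : HasDerivAt (fun s : ℝ ↦ 1 - 4 * s) (-4) s := by
    simpa using ((hasDerivAt_id s).const_mul 4).const_sub 1
  refine (((hlin.sqrt (by linarith)).const_add 1).log (by positivity)).neg.congr_deriv ?_
  field_simp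
  ring

lemma integral_two_div_sqrt_mul_one_add_sqrt {t : ℝ} (ht : 4 * t < 1) :
    ∫ s in (0)..t, 2 / (√(1 - 4 * s) * (1 + √(1 - 4 * s))) =
      log 2 - log (1 + √(1 - 4 * t)) := by
  have hlt : ∀ s ∈ uIcc 0 t, 4 * s < 1 := fun s hs ↦ by
    have : s < 1 / 4 := hs.2.trans_lt (max_lt (by norm_num) (by linarith))
    linarith
  rw [intervalIntegral.integral_eq_sub_of_hasDerivAt
    (fun s hs ↦ hasDerivAt_neg_log_one_add_sqrt (hlt s hs))]
  · norm_num
    ring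
  · refine ContinuousOn.intervalIntegrable (ContinuousOn.div continuousOn_const (by fun_prop) ?_)
    intro s hs
    have : 0 < √(1 - 4 * s) := sqrt_pos.mpr (by linarith [hlt s hs])
    positivity

lemma two_div_one_add_sqrt_one_sub_four_mul_inv_sq {z : ℝ} (hz : 1 ≤ z) :
    2 / (1 + √(1 - 4 * ((z + 1 / z)⁻¹) ^ 2)) = 1 + (z ^ 2)⁻¹ := by
  have hz₀ : 0 < z := by linarith
  have hroot : √(1 - 4 * ((z + 1 / z)⁻¹) ^ 2) = (z - 1 / z) / (z + 1 / z) := by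
    rw [← sqrt_sq (x := (z - 1 / z) / (z + 1 / z))]
    · congr 1
      field_simp
      ring
    · have : 1 / z ≤ z := by rw [div_le_iff₀ hz₀]; nlinarith
      have : 0 < z + 1 / z := by positivity
      exact div_nonneg (by linarith) this.le
  rw [hroot]
  field_simp
  ring

/-- For real `z > 1` and `x = z + 1/z`,
`ln(1 + z⁻²) = Σ_{u≥0} ((2u+1)!/((u+1)!)²)·x^{−2u−2}`, absolutely convergently. -/
theorem stmt_11 (z x : ℝ) (hz : 1 < z) (hx : x = z + 1 / z) :
    HasSum (fun u : ℕ =>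
        (((2 * u + 1).factorial : ℝ) / (((u + 1).factorial : ℝ)) ^ 2) * x⁻¹ ^ (2 * u + 2))
      (Real.log (1 + (z ^ 2)⁻¹)) ∧
    Summable (fun u : ℕ =>
      |(((2 * u + 1).factorial : ℝ) / (((u + 1).factorial : ℝ)) ^ 2) * x⁻¹ ^ (2 * u + 2)|) := by
  subst hx
  have hx₂ : 2 < z + 1 / z := by
    have : 0 < (z - 1) ^ 2 / z := by positivity
    have : z + 1 / z - 2 = (z - 1) ^ 2 / z := by field_simp; ring
    linarith
  set t := (z + 1 / z)⁻¹ ^ 2 with ht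
  have ht₀ : 0 < t := by positivity
  have ht₄ : 4 * t < 1 := by
    rw [ht, inv_pow, ← div_eq_mul_inv, div_lt_one (by positivity)]
    nlinarith
  have hseries : ∀ s ∈ uIoc 0 t,
      HasSum (fun u : ℕ ↦ ((2 * u + 1).factorial : ℝ) / ((u + 1).factorial : ℝ) ^ 2 *
        ((u + 1) * s ^ u)) (2 / (√(1 - 4 * s) * (1 + √(1 - 4 * s)))) := by
    intro s hs
    rw [uIoc_of_le ht₀.le] at hs
    exact hasSum_factorial_div_factorial_sq_mul_pow hs.1.ne'
      (abs_lt.2 ⟨by linarith [hs.1], by linarith [hs.2]⟩)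
  have hsum := hasSum_mul_pow_succ_intervalIntegral
    ((hseries t (right_mem_uIoc.2 ht₀)).summable.congr fun n ↦ by
      rw [abs_of_nonneg (by positivity), abs_of_pos ht₀]) hseries
  rw [integral_two_div_sqrt_mul_one_add_sqrt ht₄, ← log_div two_ne_zero (by positivity), ht,
    two_div_one_add_sqrt_one_sub_four_mul_inv_sq hz.le] at hsum
  simp only [← pow_mul, mul_add, mul_one] at hsum
  exact ⟨hsum, hsum.summable.abs⟩
end
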